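/- Let φ : X → Y and ψ : Y → Z be wiring diagrams, f ∈ P(X), g = P(φ)(f), and ω = ψ∘φ. Assume the induction hypothesis: S'_ω ∘ C_{ω,f} ∘ ∂ = (S'_φ × id_{⟪D_ψ⟫}) ∘ (C_{φ,f} × id_{⟪D_ψ⟫}) ∘ S'_ψ ∘ C_{ψ,g} ∘ ∂ as functions ⟪In Z⟫ → ⟪inDem ω⟫. Then π_{⟪inSup φ⟫} ∘ C_{ω,f} = π_{⟪inSup φ⟫} ∘ C_{φ,f} ∘ π_{⟪In Y⟫} ∘ S'_ψ ∘ C_{ψ,g} as functions ⟪In Z⟫ → ⟪inSup φ⟫, where π denotes entrywise coordinate projection onto the indicated wire coordinates. -/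

import Mathlib

universe u

/-- A function `f : List R → List S` is *n-historical* if it sends lists of length `t`
to lists of length `t + n`, and it commutes with the operation `∂ = List.dropLast`
of dropping the last entry of a nonempty list. -/
def Historical {R S : Type u} (n : ℕ) (f : List R → List S) : Prop :=
  (∀ ℓ : List R, (f ℓ).length = ℓ.length + n) ∧
    ∀ ℓ : List R, 1 ≤ ℓ.length → (f ℓ).dropLast = f ℓ.dropLast

/-- Glue a tuple of values indexed by `α` and a tuple of values indexed by `β` into a
tuple of values indexed by `α ⊕ β`.  (This realizes the "zipwith" identification of
lists over a disjoint union of wire sets with pairs of equal-length lists.) -/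
def glue {α β : Type} {F : α → Type u} {G : β → Type u}
    (a : ∀ x, F x) (b : ∀ y, G y) : ∀ w : α ⊕ β, Sum.elim F G w
  | Sum.inl x => a x
  | Sum.inr y => b y

/-- The product `p × q` of two functions between lists of tuples, acting on lists of
tuples indexed by disjoint unions of wire sets. -/
def prodMap {α α' β β' : Type} {F : α → Type u} {F' : α' → Type u}
    {G : β → Type u} {G' : β' → Type u}
    (p : List (∀ a, F a) → List (∀ a, F' a))
    (q : List (∀ b, G b) → List (∀ b, G' b)) :
    List (∀ w : α ⊕ β, Sum.elim F G w) → List (∀ w : α' ⊕ β', Sum.elim F' G' w) :=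
  fun ℓ =>
    List.zipWith glue (p (ℓ.map fun x a => x (Sum.inl a)))
      (q (ℓ.map fun x b => x (Sum.inr b)))

/-- A wiring diagram from a black box `X` (wires `InX`, `OutX`) to a black box `Y`
(wires `InY`, `OutY`), where a wire `w` carries the pointed value set `v- w`.
It consists of a finite set `D` of delay nodes carrying pointed value sets
(`vD` with default values `dD`), together with a supplier assignment
`s : Dem → Sup` (with `Dem = OutY ⊕ InX ⊕ D` and `Sup = InY ⊕ OutX ⊕ D`) that
preserves value sets (`compat`) and satisfies non-instantaneity: on `OutY` it lands
in `OutX ⊕ D` (witnessed by `sOut` and `noninst`). -/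
structure WD (InX OutX InY OutY : Type)
    (vInX : InX → Type u) (vOutX : OutX → Type u)
    (vInY : InY → Type u) (vOutY : OutY → Type u) where
  D : Type
  [fintypeD : Fintype D]
  vD : D → Type u
  dD : ∀ d, vD d
  s : OutY ⊕ InX ⊕ D → InY ⊕ OutX ⊕ D
  sOut : OutY → OutX ⊕ D
  noninst : ∀ z, s (Sum.inl z) = Sum.inr (sOut z)
  compat : ∀ w, Sum.elim vInY (Sum.elim vOutX vD) (s w)
      = Sum.elim vOutY (Sum.elim vInX vD) w

attribute [instance] WD.fintypeD

namespace WD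

variable {InX OutX InY OutY InZ OutZ : Type}
  {vInX : InX → Type u} {vOutX : OutX → Type u}
  {vInY : InY → Type u} {vOutY : OutY → Type u}
  {vInZ : InZ → Type u} {vOutZ : OutZ → Type u}

/-- The value sets carried by the supply wires `Sup(φ) = InY ⊕ OutX ⊕ D_φ`. -/
def vSup (φ : WD InX OutX InY OutY vInX vOutX vInY vOutY) :
    InY ⊕ OutX ⊕ φ.D → Type u :=
  Sum.elim vInY (Sum.elim vOutX φ.vD)

/-- The shuttle function `S'_φ : ⟪Sup φ⟫ → ⟪inDem φ⟫`, sending the values on the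
supply wires to the internal demand wires `inDem(φ) = InX ⊕ D_φ` along the supplier
assignment, entrywise in time. -/
def S' (φ : WD InX OutX InY OutY vInX vOutX vInY vOutY) :
    List (∀ w, φ.vSup w) → List (∀ w : InX ⊕ φ.D, Sum.elim vInX φ.vD w) :=
  List.map fun x w => cast (φ.compat (Sum.inr w)) (x (φ.s (Sum.inr w)))

/-- The shuttle function `S''_φ : ⟪inSup φ⟫ → ⟪Out Y⟫`, reading off the values
demanded by the global outputs `OutY` from the internal supply wires
`inSup(φ) = OutX ⊕ D_φ` (well defined by non-instantaneity). -/
def S'' (φ : WD InX OutX InY OutY vInX vOutX vInY vOutY) :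
    List (∀ w : OutX ⊕ φ.D, Sum.elim vOutX φ.vD w) → List (∀ z, vOutY z) :=
  List.map fun y z =>
    cast ((congrArg φ.vSup (φ.noninst z)).symm.trans (φ.compat (Sum.inl z)))
      (y (φ.sOut z))

/-- The evaluation function `E_{φ,f} = f × δ¹ : ⟪inDem φ⟫ → ⟪inSup φ⟫`, applying the
propagator `f` on the `InX` coordinates and the 1-moment delay (prepending the
default value) on the delay coordinates. -/
def E (φ : WD InX OutX InY OutY vInX vOutX vInY vOutY)
    (f : List (∀ i, vInX i) → List (∀ o, vOutX o)) :
    List (∀ w : InX ⊕ φ.D, Sum.elim vInX φ.vD w) →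
      List (∀ w : OutX ⊕ φ.D, Sum.elim vOutX φ.vD w) :=
  fun ℓ =>
    List.zipWith glue (f (ℓ.map fun x i => x (Sum.inl i)))
      (φ.dD :: ℓ.map fun x d => x (Sum.inr d))

/-- The cascade `C_{φ,f} : ⟪In Y⟫ → ⟪Sup φ⟫`, defined by recursion on the length:
`C([]) = []` and `C(ℓ) = ℓ ⋎ E_{φ,f}(S'_φ(C(∂ℓ)))` for nonempty `ℓ`. -/
def C (φ : WD InX OutX InY OutY vInX vOutX vInY vOutY)
    (f : List (∀ i, vInX i) → List (∀ o, vOutX o)) :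
    List (∀ i, vInY i) → List (∀ w, φ.vSup w)
  | [] => []
  | a :: as => List.zipWith glue (a :: as) (φ.E f (φ.S' (φ.C f (a :: as).dropLast)))
termination_by ℓ => ℓ.length
decreasing_by simp [List.length_dropLast]

/-- The propagator `P(φ)(f) = S''_φ ∘ E_{φ,f} ∘ S'_φ ∘ C_{φ,f} : ⟪In Y⟫ → ⟪Out Y⟫`
obtained by filling the inner box of `φ` with the propagator `f`. -/
def P (φ : WD InX OutX InY OutY vInX vOutX vInY vOutY)
    (f : List (∀ i, vInX i) → List (∀ o, vOutX o)) :
    List (∀ i, vInY i) → List (∀ z, vOutY z) :=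
  fun ℓ => φ.S'' (φ.E f (φ.S' (φ.C f ℓ)))

/-- The map `f̄ : Sup(ψ) → Sup(ψ∘φ)`: the identity on `In Z` and `D_ψ`, and equal to
`s_φ|_{Out Y}` on `Out Y`. -/
def fbar (ψ : WD InY OutY InZ OutZ vInY vOutY vInZ vOutZ)
    (φ : WD InX OutX InY OutY vInX vOutX vInY vOutY) :
    InZ ⊕ OutY ⊕ ψ.D → InZ ⊕ OutX ⊕ (φ.D ⊕ ψ.D)
  | Sum.inl z => Sum.inl z
  | Sum.inr (Sum.inl o) =>
      match φ.sOut o with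
      | Sum.inl x => Sum.inr (Sum.inl x)
      | Sum.inr d => Sum.inr (Sum.inr (Sum.inl d))
  | Sum.inr (Sum.inr d) => Sum.inr (Sum.inr (Sum.inr d))

/-- The map `h : Sup(φ) → Sup(ψ∘φ)`: equal to `f̄ ∘ s_ψ|_{In Y}` on `In Y` and the
identity on `Out X` and `D_φ`. -/
def hmap (ψ : WD InY OutY InZ OutZ vInY vOutY vInZ vOutZ)
    (φ : WD InX OutX InY OutY vInX vOutX vInY vOutY) :
    InY ⊕ OutX ⊕ φ.D → InZ ⊕ OutX ⊕ (φ.D ⊕ ψ.D)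
  | Sum.inl i => fbar ψ φ (ψ.s (Sum.inr (Sum.inl i)))
  | Sum.inr (Sum.inl x) => Sum.inr (Sum.inl x)
  | Sum.inr (Sum.inr d) => Sum.inr (Sum.inr (Sum.inl d))

/-- The restriction of `f̄` to `Out Y ⊔ D_ψ`, landing in the internal supplies of the
composite. -/
def fbarOut (ψ : WD InY OutY InZ OutZ vInY vOutY vInZ vOutZ)
    (φ : WD InX OutX InY OutY vInX vOutX vInY vOutY) :
    OutY ⊕ ψ.D → OutX ⊕ (φ.D ⊕ ψ.D)
  | Sum.inl o =>
      match φ.sOut o with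
      | Sum.inl x => Sum.inl x
      | Sum.inr d => Sum.inr (Sum.inl d)
  | Sum.inr d => Sum.inr (Sum.inr d)

theorem fbar_inr (ψ : WD InY OutY InZ OutZ vInY vOutY vInZ vOutZ)
    (φ : WD InX OutX InY OutY vInX vOutX vInY vOutY) (u : OutY ⊕ ψ.D) :
    fbar ψ φ (Sum.inr u) = Sum.inr (fbarOut ψ φ u) := by
  rcases u with o | d
  · rcases h : φ.sOut o with x | d <;> simp [fbar, fbarOut, h]
  · rfl

theorem vSup_fbar (ψ : WD InY OutY InZ OutZ vInY vOutY vInZ vOutZ)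
    (φ : WD InX OutX InY OutY vInX vOutX vInY vOutY) (u : InZ ⊕ OutY ⊕ ψ.D) :
    Sum.elim vInZ (Sum.elim vOutX (Sum.elim φ.vD ψ.vD)) (fbar ψ φ u)
      = Sum.elim vInZ (Sum.elim vOutY ψ.vD) u := by
  rcases u with z | u
  · rfl
  rcases u with o | d
  · have h0 := (congrArg (Sum.elim vInY (Sum.elim vOutX φ.vD))
      (φ.noninst o)).symm.trans (φ.compat (Sum.inl o))
    rcases h : φ.sOut o with x | d
    · rw [h] at h0
      simpa [fbar, h] using h0
    · rw [h] at h0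
      simpa [fbar, h] using h0
  · rfl

theorem vSup_hmap (ψ : WD InY OutY InZ OutZ vInY vOutY vInZ vOutZ)
    (φ : WD InX OutX InY OutY vInX vOutX vInY vOutY) (u : InY ⊕ OutX ⊕ φ.D) :
    Sum.elim vInZ (Sum.elim vOutX (Sum.elim φ.vD ψ.vD)) (hmap ψ φ u)
      = Sum.elim vInY (Sum.elim vOutX φ.vD) u := by
  rcases u with i | u
  · exact (vSup_fbar ψ φ (ψ.s (Sum.inr (Sum.inl i)))).trans
      (ψ.compat (Sum.inr (Sum.inl i)))
  rcases u with x | d <;> rfl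

/-- The composite wiring diagram `ψ ∘ φ : X → Z` of `φ : X → Y` and `ψ : Y → Z`,
with delay nodes `D_φ ⊔ D_ψ`, whose supplier assignment is `h ∘ s_φ` on `In X ⊔ D_φ`
and `f̄ ∘ s_ψ` on `Out Z ⊔ D_ψ`. -/
def comp (ψ : WD InY OutY InZ OutZ vInY vOutY vInZ vOutZ)
    (φ : WD InX OutX InY OutY vInX vOutX vInY vOutY) :
    WD InX OutX InZ OutZ vInX vOutX vInZ vOutZ where
  D := φ.D ⊕ ψ.D
  vD := Sum.elim φ.vD ψ.vD
  dD := fun d =>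
    match d with
    | Sum.inl d => φ.dD d
    | Sum.inr d => ψ.dD d
  s := fun w =>
    match w with
    | Sum.inl z => fbar ψ φ (ψ.s (Sum.inl z))
    | Sum.inr (Sum.inl i) => hmap ψ φ (φ.s (Sum.inr (Sum.inl i)))
    | Sum.inr (Sum.inr (Sum.inl d)) => hmap ψ φ (φ.s (Sum.inr (Sum.inr d)))
    | Sum.inr (Sum.inr (Sum.inr d)) => fbar ψ φ (ψ.s (Sum.inr (Sum.inr d)))
  sOut := fun z => fbarOut ψ φ (ψ.sOut z)
  noninst := fun z => by
    show fbar ψ φ (ψ.s (Sum.inl z)) = _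
    rw [ψ.noninst z, fbar_inr]
  compat := fun w => by
    rcases w with z | w
    · exact (vSup_fbar ψ φ (ψ.s (Sum.inl z))).trans (ψ.compat (Sum.inl z))
    rcases w with i | d
    · exact (vSup_hmap ψ φ (φ.s (Sum.inr (Sum.inl i)))).trans
        (φ.compat (Sum.inr (Sum.inl i)))
    rcases d with d | d
    · exact (vSup_hmap ψ φ (φ.s (Sum.inr (Sum.inr d)))).trans
        (φ.compat (Sum.inr (Sum.inr d)))
    · exact (vSup_fbar ψ φ (ψ.s (Sum.inr (Sum.inr d)))).trans
        (ψ.compat (Sum.inr (Sum.inr d)))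

end WD

namespace WD

variable {InX OutX InY OutY InZ OutZ : Type}
  {vInX : InX → Type u} {vOutX : OutX → Type u}
  {vInY : InY → Type u} {vOutY : OutY → Type u}
  {vInZ : InZ → Type u} {vOutZ : OutZ → Type u}

/-- The canonical identification `Sup(ψ∘φ) = In Z ⊔ ((Out X ⊔ D_φ) ⊔ D_ψ)
= In Z ⊔ inSup(φ) ⊔ D_ψ`, entrywise on tuples of values. -/
def reassocSup (ψ : WD InY OutY InZ OutZ vInY vOutY vInZ vOutZ)
    (φ : WD InX OutX InY OutY vInX vOutX vInY vOutY)
    (x : ∀ w : InZ ⊕ OutX ⊕ (φ.D ⊕ ψ.D),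
      Sum.elim vInZ (Sum.elim vOutX (Sum.elim φ.vD ψ.vD)) w) :
    ∀ w : InZ ⊕ ((OutX ⊕ φ.D) ⊕ ψ.D),
      Sum.elim vInZ (Sum.elim (Sum.elim vOutX φ.vD) ψ.vD) w
  | Sum.inl z => x (Sum.inl z)
  | Sum.inr (Sum.inl (Sum.inl o)) => x (Sum.inr (Sum.inl o))
  | Sum.inr (Sum.inl (Sum.inr d)) => x (Sum.inr (Sum.inr (Sum.inl d)))
  | Sum.inr (Sum.inr d) => x (Sum.inr (Sum.inr (Sum.inr d)))

/-- The canonical identification `inDem(φ) ⊔ D_ψ = (In X ⊔ D_φ) ⊔ D_ψ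
= In X ⊔ (D_φ ⊔ D_ψ) = inDem(ψ∘φ)`, entrywise on tuples of values. -/
def reassocDem (ψ : WD InY OutY InZ OutZ vInY vOutY vInZ vOutZ)
    (φ : WD InX OutX InY OutY vInX vOutX vInY vOutY)
    (x : ∀ w : (InX ⊕ φ.D) ⊕ ψ.D, Sum.elim (Sum.elim vInX φ.vD) ψ.vD w) :
    ∀ w : InX ⊕ (φ.D ⊕ ψ.D), Sum.elim vInX (Sum.elim φ.vD ψ.vD) w
  | Sum.inl i => x (Sum.inl (Sum.inl i))
  | Sum.inr (Sum.inl d) => x (Sum.inl (Sum.inr d))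
  | Sum.inr (Sum.inr d) => x (Sum.inr d)

end WD

namespace WD

variable {InX OutX InY OutY InZ OutZ : Type}
  {vInX : InX → Type u} {vOutX : OutX → Type u}
  {vInY : InY → Type u} {vOutY : OutY → Type u}
  {vInZ : InZ → Type u} {vOutZ : OutZ → Type u}

/-- The coordinate projection `π_{inSup φ}` of a tuple of values on the supply wires
of the composite `ω = ψ∘φ` onto the internal supply wires `inSup(φ) = Out X ⊔ D_φ`
of `φ`. -/
def projInSupPhi (ψ : WD InY OutY InZ OutZ vInY vOutY vInZ vOutZ)
    (φ : WD InX OutX InY OutY vInX vOutX vInY vOutY)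
    (x : ∀ w, (ψ.comp φ).vSup w) :
    ∀ w : OutX ⊕ φ.D, Sum.elim vOutX φ.vD w
  | Sum.inl o => x (Sum.inr (Sum.inl o))
  | Sum.inr d => x (Sum.inr (Sum.inr (Sum.inl d)))

end WD

/-! On a nonempty input `ℓ` the cascade is `ℓ ⋎ E(S'(C(∂ℓ)))`, so its `inSup` part is the
evaluation of the cascade one moment earlier. For `ω = ψ∘φ` the induction hypothesis expresses
that earlier cascade through the cascades of `ψ` and `φ`, and projecting its evaluation to
`inSup φ` only sees the `φ`-part: `E_{φ,f}(S'_φ(C_{φ,f}(π_{In Y}(S'_ψ(C_{ψ,g}(∂ℓ))))))`. On the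
other side, `∂` commutes with `π_{In Y} ∘ S'_ψ ∘ C_{ψ,g}` because `g = P(φ)(f)` is again
1-historical, and cascades of historical propagators are 0-historical. -/

namespace List

variable {α β γ δ : Type*}

theorem map_zipWith_of_length_le_left {g : α → β → γ} {h : γ → δ} {k : α → δ}
    (hk : ∀ a b, h (g a b) = k a) {l₁ : List α} {l₂ : List β}
    (hl : l₁.length ≤ l₂.length) : (zipWith g l₁ l₂).map h = l₁.map k := by
  rw [← map_uncurry_zip_eq_zipWith, map_map,
    show h ∘ Function.uncurry g = k ∘ Prod.fst from funext fun p => hk p.1 p.2,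
    ← map_map, map_fst_zip hl]

theorem map_zipWith_of_length_le_right {g : α → β → γ} {h : γ → δ} {k : β → δ}
    (hk : ∀ a b, h (g a b) = k b) {l₁ : List α} {l₂ : List β}
    (hl : l₂.length ≤ l₁.length) : (zipWith g l₁ l₂).map h = l₂.map k := by
  rw [← map_uncurry_zip_eq_zipWith, map_map,
    show h ∘ Function.uncurry g = k ∘ Prod.snd from funext fun p => hk p.1 p.2,
    ← map_map, map_snd_zip hl]

theorem map_eq_map_map {f : α → β} {g : β → γ} {k : α → γ} (h : ∀ a, k a = g (f a))
    (l : List α) : l.map k = (l.map f).map g := by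
  rw [map_map]
  exact map_congr_left fun a _ => h a

theorem map_zipWith_eq_zipWith_map_right {β' γ' : Type*} {g : α → β → γ} {g' : α → β' → γ'}
    {h : γ → γ'} {k : β → β'} (hk : ∀ a b, h (g a b) = g' a (k b)) (l₁ : List α) (l₂ : List β) :
    (zipWith g l₁ l₂).map h = zipWith g' l₁ (l₂.map k) := by
  simp only [map_zipWith, zipWith_map_right, hk]

theorem dropLast_zipWith_of_length_eq (g : α → β → γ) {l₁ : List α} {l₂ : List β}
    (hl : l₁.length = l₂.length) :
    (zipWith g l₁ l₂).dropLast = zipWith g l₁.dropLast l₂.dropLast := by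
  rw [dropLast_eq_take, take_zipWith, length_zipWith, hl, Nat.min_self,
    dropLast_eq_take, dropLast_eq_take, hl]

end List

section Historical

variable {R S T : Type u}

theorem Historical.comp {m n : ℕ} {g : List S → List T} {f : List R → List S}
    (hg : Historical m g) (hf : Historical n f) : Historical (n + m) (g ∘ f) := by
  refine ⟨fun ℓ => by simp [hg.1, hf.1, Nat.add_assoc], fun ℓ hℓ => ?_⟩
  rw [Function.comp_apply, hg.2 _ (by rw [hf.1]; omega), hf.2 ℓ hℓ, Function.comp_apply]

theorem historical_map (h : R → S) : Historical 0 (List.map h) :=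
  ⟨fun _ => List.length_map h, fun _ _ => List.map_dropLast.symm⟩

theorem historical_cons (d : R) : Historical 1 (List.cons d) := by
  refine ⟨fun _ => rfl, fun ℓ hℓ => ?_⟩
  obtain ⟨a, ℓ, rfl⟩ := List.exists_cons_of_length_pos hℓ
  rfl

theorem Historical.zipWith {n : ℕ} {S' : Type u} {p : List R → List S} {q : List R → List S'}
    (hp : Historical n p) (hq : Historical n q) (g : S → S' → T) :
    Historical n fun ℓ => List.zipWith g (p ℓ) (q ℓ) := by
  refine ⟨fun ℓ => by simp [hp.1, hq.1], fun ℓ hℓ => ?_⟩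
  rw [List.dropLast_zipWith_of_length_eq g (by rw [hp.1, hq.1]), hp.2 ℓ hℓ, hq.2 ℓ hℓ]

end Historical

theorem map_inl_prodMap {α α' β β' : Type} {F : α → Type u} {F' : α' → Type u}
    {G : β → Type u} {G' : β' → Type u}
    {p : List (∀ a, F a) → List (∀ a, F' a)} {q : List (∀ b, G b) → List (∀ b, G' b)}
    (hp : ∀ l, (p l).length = l.length) (hq : ∀ l, (q l).length = l.length)
    (ℓ : List (∀ w : α ⊕ β, Sum.elim F G w)) :
    (prodMap p q ℓ).map (fun x a => x (Sum.inl a)) = p (ℓ.map fun x a => x (Sum.inl a)) := by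
  unfold prodMap
  refine (List.map_zipWith_of_length_le_left (g := glue) (k := id) (fun _ _ => rfl) ?_).trans
    (List.map_id _)
  simp only [hp, hq]
  exact ((List.length_map _).trans (List.length_map _).symm).le

namespace WD

variable {InX OutX InY OutY InZ OutZ : Type}
  {vInX : InX → Type u} {vOutX : OutX → Type u}
  {vInY : InY → Type u} {vOutY : OutY → Type u}
  {vInZ : InZ → Type u} {vOutZ : OutZ → Type u}

section Cascade

variable (φ : WD InX OutX InY OutY vInX vOutX vInY vOutY)
  {f : List (∀ i, vInX i) → List (∀ o, vOutX o)}

theorem historical_S' : Historical 0 φ.S' :=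
  historical_map _

theorem historical_E (hf : Historical 1 f) : Historical 1 (φ.E f) :=
  (hf.comp (historical_map _)).zipWith ((historical_cons _).comp (historical_map _)) glue

theorem C_nil : φ.C f [] = [] := by
  rw [C]

-- The element type is pinned to `φ.vSup`, the one of `φ.C f ℓ`, so that the equation rewrites.
theorem C_of_ne_nil {ℓ : List (∀ i, vInY i)} (h : ℓ ≠ []) :
    φ.C f ℓ = List.zipWith (γ := ∀ w, φ.vSup w) glue ℓ (φ.E f (φ.S' (φ.C f ℓ.dropLast))) := by
  obtain ⟨a, ℓ, rfl⟩ := List.exists_cons_of_ne_nil h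
  rw [C]

theorem length_C (hf : Historical 1 f) (ℓ : List (∀ i, vInY i)) :
    (φ.C f ℓ).length = ℓ.length := by
  rcases eq_or_ne ℓ [] with rfl | h
  · rw [C_nil]; rfl
  rw [C_of_ne_nil φ h]
  erw [List.length_zipWith]
  rw [(historical_E φ hf).1, (historical_S' φ).1, length_C hf ℓ.dropLast, List.length_dropLast,
    Nat.sub_add_cancel (List.length_pos_of_ne_nil h), Nat.min_self]
termination_by ℓ.length
decreasing_by simpa using List.length_pos_of_ne_nil h

theorem length_E_S'_C_dropLast (hf : Historical 1 f) {ℓ : List (∀ i, vInY i)} (h : ℓ ≠ []) :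
    (φ.E f (φ.S' (φ.C f ℓ.dropLast))).length = ℓ.length := by
  rw [(historical_E φ hf).1, (historical_S' φ).1, length_C φ hf, List.length_dropLast,
    Nat.sub_add_cancel (List.length_pos_of_ne_nil h)]

theorem dropLast_C (hf : Historical 1 f) (ℓ : List (∀ i, vInY i)) :
    (φ.C f ℓ).dropLast = φ.C f ℓ.dropLast := by
  rcases eq_or_ne ℓ [] with rfl | h
  · rw [List.dropLast_nil, C_nil]; rfl
  rw [C_of_ne_nil φ h]
  erw [List.dropLast_zipWith_of_length_eq glue (length_E_S'_C_dropLast φ hf h).symm]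
  rcases eq_or_ne ℓ.dropLast [] with h' | h'
  · rw [h', C_nil]; rfl
  have hpos : 1 ≤ (φ.C f ℓ.dropLast).length := by
    rw [length_C φ hf]
    exact List.length_pos_of_ne_nil h'
  rw [(historical_E φ hf).2 _ (by rwa [(historical_S' φ).1]), (historical_S' φ).2 _ hpos,
    dropLast_C hf ℓ.dropLast, C_of_ne_nil φ h']
  rfl
termination_by ℓ.length
decreasing_by simpa using List.length_pos_of_ne_nil h

theorem historical_C (hf : Historical 1 f) : Historical 0 (φ.C f) :=
  ⟨length_C φ hf, fun ℓ _ => dropLast_C φ hf ℓ⟩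

theorem historical_P (hf : Historical 1 f) : Historical 1 (φ.P f) :=
  (historical_map _).comp ((historical_E φ hf).comp ((historical_S' φ).comp (historical_C φ hf)))

theorem historical_map_S'_C {R : Type u} (hf : Historical 1 f)
    (h : (∀ w : InX ⊕ φ.D, Sum.elim vInX φ.vD w) → R) :
    Historical 0 fun ℓ => (φ.S' (φ.C f ℓ)).map h :=
  (historical_map h).comp ((historical_S' φ).comp (historical_C φ hf))

theorem map_inr_C_of_ne_nil (hf : Historical 1 f) {ℓ : List (∀ i, vInY i)} (h : ℓ ≠ []) :
    ((φ.C f ℓ).map (fun x w => x (Sum.inr w)) : List (∀ w, Sum.elim vOutX φ.vD w))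
      = φ.E f (φ.S' (φ.C f ℓ.dropLast)) := by
  rw [C_of_ne_nil φ h]
  exact (List.map_zipWith_of_length_le_right (g := glue) (k := id) (fun _ _ => rfl)
    (length_E_S'_C_dropLast φ hf h).le).trans (List.map_id _)

end Cascade

section Composite

variable (ψ : WD InY OutY InZ OutZ vInY vOutY vInZ vOutZ)
  (φ : WD InX OutX InY OutY vInX vOutX vInY vOutY)

def projInSup (e : ∀ w : OutX ⊕ (φ.D ⊕ ψ.D), Sum.elim vOutX (Sum.elim φ.vD ψ.vD) w) :
    ∀ w : OutX ⊕ φ.D, Sum.elim vOutX φ.vD w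
  | Sum.inl o => e (Sum.inl o)
  | Sum.inr d => e (Sum.inr (Sum.inl d))

theorem projInSupPhi_eq (x : ∀ w, (ψ.comp φ).vSup w) :
    projInSupPhi ψ φ x = projInSup ψ φ fun w => x (Sum.inr w) := by
  funext w
  cases w <;> rfl

theorem map_projInSup_E_comp (f : List (∀ i, vInX i) → List (∀ o, vOutX o))
    (L : List (∀ w : (InX ⊕ φ.D) ⊕ ψ.D, Sum.elim (Sum.elim vInX φ.vD) ψ.vD w)) :
    ((ψ.comp φ).E f (L.map (reassocDem ψ φ))).map (projInSup ψ φ)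
      = φ.E f (L.map fun x a => x (Sum.inl a)) := by
  unfold E
  refine (List.map_zipWith_eq_zipWith_map_right (g' := glue) (k := fun e d => e (Sum.inl d))
    (fun _ _ => funext fun w => by cases w <;> rfl) _ _).trans ?_
  congr 1
  · exact congrArg f (List.map_map.trans (List.map_eq_map_map (fun _ => by rfl) L))
  · exact congrArg (List.cons φ.dD)
      (List.map_map.trans (List.map_map.trans (List.map_eq_map_map (fun _ => by rfl) L)))

end Composite

end WD

open WD in
theorem proj_cascade_comp_general {InX OutX InY OutY InZ OutZ : Type}
    {vInX : InX → Type u} {vOutX : OutX → Type u}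
    {vInY : InY → Type u} {vOutY : OutY → Type u}
    {vInZ : InZ → Type u} {vOutZ : OutZ → Type u}
    (φ : WD InX OutX InY OutY vInX vOutX vInY vOutY)
    (ψ : WD InY OutY InZ OutZ vInY vOutY vInZ vOutZ)
    (f : List (∀ i, vInX i) → List (∀ o, vOutX o))
    (hf : Historical 1 f)
    (hIH : (fun ℓ : List (∀ z, vInZ z) =>
        (ψ.comp φ).S' ((ψ.comp φ).C f ℓ.dropLast))
      = fun ℓ : List (∀ z, vInZ z) =>
        (prodMap φ.S' (id : List (∀ d, ψ.vD d) → List (∀ d, ψ.vD d))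
          (prodMap (φ.C f) (id : List (∀ d, ψ.vD d) → List (∀ d, ψ.vD d))
            (ψ.S' (ψ.C (φ.P f) ℓ.dropLast)))).map (reassocDem ψ φ)) :
    (fun ℓ : List (∀ z, vInZ z) => ((ψ.comp φ).C f ℓ).map (projInSupPhi ψ φ))
      = fun ℓ : List (∀ z, vInZ z) =>
          (φ.C f ((ψ.S' (ψ.C (φ.P f) ℓ)).map fun x i => x (Sum.inl i))).map
            fun x w => x (Sum.inr w) := by
  funext ℓ
  rcases eq_or_ne ℓ [] with rfl | hℓ
  · simp only [C_nil, S', List.map_nil]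
    exact congrArg (List.map _) (C_nil φ).symm
  let N := ψ.S' (ψ.C (φ.P f) ℓ.dropLast)
  let M : List (∀ i, vInY i) := (ψ.S' (ψ.C (φ.P f) ℓ)).map fun x i => x (Sum.inl i)
  have hπ := historical_map_S'_C ψ (historical_P φ hf) (R := ∀ i, vInY i) fun x i => x (Sum.inl i)
  have hM : M ≠ [] :=
    List.ne_nil_of_length_pos (lt_of_lt_of_eq (List.length_pos_of_ne_nil hℓ) (hπ.1 ℓ).symm)
  have hMdrop : M.dropLast = N.map fun x i => x (Sum.inl i) :=
    hπ.2 ℓ (List.length_pos_of_ne_nil hℓ)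
  calc
    _ = (((ψ.comp φ).C f ℓ).map fun x w => x (Sum.inr w)).map (projInSup ψ φ) :=
        List.map_eq_map_map (projInSupPhi_eq ψ φ) _
    _ = ((ψ.comp φ).E f ((ψ.comp φ).S' ((ψ.comp φ).C f ℓ.dropLast))).map (projInSup ψ φ) :=
        congrArg _ (map_inr_C_of_ne_nil _ hf hℓ)
    _ = ((ψ.comp φ).E f ((prodMap φ.S' id (prodMap (φ.C f) id N)).map (reassocDem ψ φ))).map
          (projInSup ψ φ) :=
        congrArg (fun L => ((ψ.comp φ).E f L).map (projInSup ψ φ)) (congrFun hIH ℓ)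
    _ = φ.E f ((prodMap φ.S' id (prodMap (φ.C f) id N)).map fun x a => x (Sum.inl a)) :=
        map_projInSup_E_comp ψ φ f _
    _ = φ.E f (φ.S' (φ.C f (N.map fun x i => x (Sum.inl i)))) :=
        congrArg _ ((map_inl_prodMap (historical_S' φ).1 (fun _ => rfl) _).trans
          (congrArg _ (map_inl_prodMap (historical_C φ hf).1 (fun _ => rfl) _)))
    _ = φ.E f (φ.S' (φ.C f M.dropLast)) :=
        congrArg (fun L => φ.E f (φ.S' (φ.C f L))) hMdrop.symm
    _ = _ := (map_inr_C_of_ne_nil φ hf hM).symm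

open WD in
/-- Let `φ : X → Y`, `ψ : Y → Z` be wiring diagrams, `f ∈ P(X)`, `g = P(φ)(f)` and
`ω = ψ∘φ`.  Assuming the induction hypothesis
`S'_ω ∘ C_{ω,f} ∘ ∂ = (S'_φ × id) ∘ (C_{φ,f} × id) ∘ S'_ψ ∘ C_{ψ,g} ∘ ∂`,
one has `π_{⟪inSup φ⟫} ∘ C_{ω,f} = π_{⟪inSup φ⟫} ∘ C_{φ,f} ∘ π_{⟪In Y⟫} ∘ S'_ψ ∘ C_{ψ,g}`
as functions `⟪In Z⟫ → ⟪inSup φ⟫`, where `π` denotes entrywise coordinate projection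
onto the indicated wire coordinates. -/
theorem proj_cascade_comp {InX OutX InY OutY InZ OutZ : Type}
    [Fintype InX] [Fintype OutX] [Fintype InY] [Fintype OutY]
    [Fintype InZ] [Fintype OutZ]
    {vInX : InX → Type u} {vOutX : OutX → Type u}
    {vInY : InY → Type u} {vOutY : OutY → Type u}
    {vInZ : InZ → Type u} {vOutZ : OutZ → Type u}
    (φ : WD InX OutX InY OutY vInX vOutX vInY vOutY)
    (ψ : WD InY OutY InZ OutZ vInY vOutY vInZ vOutZ)
    (f : List (∀ i, vInX i) → List (∀ o, vOutX o))
    (hf : Historical 1 f)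
    (hIH : (fun ℓ : List (∀ z, vInZ z) =>
        (ψ.comp φ).S' ((ψ.comp φ).C f ℓ.dropLast))
      = fun ℓ : List (∀ z, vInZ z) =>
        (prodMap φ.S' (id : List (∀ d, ψ.vD d) → List (∀ d, ψ.vD d))
          (prodMap (φ.C f) (id : List (∀ d, ψ.vD d) → List (∀ d, ψ.vD d))
            (ψ.S' (ψ.C (φ.P f) ℓ.dropLast)))).map (reassocDem ψ φ)) :
    (fun ℓ : List (∀ z, vInZ z) => ((ψ.comp φ).C f ℓ).map (projInSupPhi ψ φ))
      = fun ℓ : List (∀ z, vInZ z) =>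
          (φ.C f ((ψ.S' (ψ.C (φ.P f) ℓ)).map fun x i => x (Sum.inl i))).map
            fun x w => x (Sum.inr w) :=
  proj_cascade_comp_general φ ψ f hf hIH
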